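/- Consider the perfect-information WGA G with states Q = {q_0, q_1}, initial state q_0, a single action a, observations {q_0} and {q_1}, and transitions (q_0,a,q_1) of weight −1, (q_1,a,q_0) of weight +1, and (q_1,a,q_1) of weight 0. Then Eve wins the objectives MPInf(0) and MPSup(0) in G, but for every lmax ≥ 1 she does not win DirFix(0,lmax), UFix(0,lmax) or Fix(0,lmax), and she does not win UDirBnd(0), DirBnd(0), UBnd(0) or Bnd(0). Hence winning the mean-payoff objectives is in general not sufficient for winning any of the fixed or bounded window mean-payoff objectives. -/

import Mathlib

open scoped Classical

/-- A weighted game arena with partial observation. -/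
structure WGA where
  Q : Type
  fintypeQ : Fintype Q
  qI : Q
  A : Type
  fintypeA : Fintype A
  nonemptyA : Nonempty A
  Δ : Q → A → Q → Prop
  total : ∀ q a, ∃ q', Δ q a q'
  w : Q → A → Q → ℤ
  Obs : Set (Set Q)
  obs_empty : ∅ ∉ Obs
  obs_partition : ∀ q : Q, ∃! o, o ∈ Obs ∧ q ∈ o

attribute [instance] WGA.fintypeQ WGA.fintypeA WGA.nonemptyA

namespace WGA

variable (G : WGA)

/-- A concrete path compatible with the given sequences of observations and actions. -/
def Concretizes (obs : ℕ → Set G.Q) (act : ℕ → G.A) (π : ℕ → G.Q) : Prop :=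
  (∀ i, π i ∈ obs i) ∧ ∀ i, G.Δ (π i) (act i) (π (i + 1))

/-- Plays: infinite abstract paths starting at the initial observation. -/
def IsPlay (obs : ℕ → Set G.Q) (act : ℕ → G.A) : Prop :=
  (∀ i, obs i ∈ G.Obs) ∧ G.qI ∈ obs 0 ∧ ∃ π, G.Concretizes obs act π

/-- Sum of the `j` transition weights starting at position `i`. -/
def winSum (π : ℕ → G.Q) (act : ℕ → G.A) (i j : ℕ) : ℤ :=
  ∑ k ∈ Finset.range j, G.w (π (i + k)) (act (i + k)) (π (i + k + 1))

/-- Good window at position `i` with window size bound `lmax`. -/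
def GW (ν : ℚ) (i lmax : ℕ) (π : ℕ → G.Q) (act : ℕ → G.A) : Prop :=
  ∃ j, 1 ≤ j ∧ j ≤ lmax ∧ ν ≤ (G.winSum π act i j : ℚ) / (j : ℚ)

def DirFix (ν : ℚ) (lmax : ℕ) (obs : ℕ → Set G.Q) (act : ℕ → G.A) : Prop :=
  ∀ π, G.Concretizes obs act π → ∀ i, G.GW ν i lmax π act

def UFix (ν : ℚ) (lmax : ℕ) (obs : ℕ → Set G.Q) (act : ℕ → G.A) : Prop :=
  ∃ i, ∀ π, G.Concretizes obs act π → ∀ j, i ≤ j → G.GW ν j lmax π act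

def Fix (ν : ℚ) (lmax : ℕ) (obs : ℕ → Set G.Q) (act : ℕ → G.A) : Prop :=
  ∀ π, G.Concretizes obs act π → ∃ i, ∀ j, i ≤ j → G.GW ν j lmax π act

def UDirBnd (ν : ℚ) (obs : ℕ → Set G.Q) (act : ℕ → G.A) : Prop :=
  ∃ lmax, 1 ≤ lmax ∧ ∀ π, G.Concretizes obs act π → ∀ i, G.GW ν i lmax π act

def DirBnd (ν : ℚ) (obs : ℕ → Set G.Q) (act : ℕ → G.A) : Prop :=
  ∀ π, G.Concretizes obs act π → ∃ lmax, 1 ≤ lmax ∧ ∀ i, G.GW ν i lmax π act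

def UBnd (ν : ℚ) (obs : ℕ → Set G.Q) (act : ℕ → G.A) : Prop :=
  ∃ lmax, 1 ≤ lmax ∧ ∃ i, ∀ π, G.Concretizes obs act π → ∀ j, i ≤ j → G.GW ν j lmax π act

def Bnd (ν : ℚ) (obs : ℕ → Set G.Q) (act : ℕ → G.A) : Prop :=
  ∀ π, G.Concretizes obs act π → ∃ lmax, 1 ≤ lmax ∧ ∃ i, ∀ j, i ≤ j → G.GW ν j lmax π act

noncomputable def MPinf (π : ℕ → G.Q) (act : ℕ → G.A) : ℝ :=
  Filter.liminf (fun n : ℕ => (G.winSum π act 0 n : ℝ) / (n : ℝ)) Filter.atTop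

noncomputable def MPsup (π : ℕ → G.Q) (act : ℕ → G.A) : ℝ :=
  Filter.limsup (fun n : ℕ => (G.winSum π act 0 n : ℝ) / (n : ℝ)) Filter.atTop

def MPInfObj (ν : ℚ) (obs : ℕ → Set G.Q) (act : ℕ → G.A) : Prop :=
  ∀ π, G.Concretizes obs act π → (ν : ℝ) ≤ G.MPinf π act

def MPSupObj (ν : ℚ) (obs : ℕ → Set G.Q) (act : ℕ → G.A) : Prop :=
  ∀ π, G.Concretizes obs act π → (ν : ℝ) ≤ G.MPsup π act

/-- The finite history (prefix) of a play after `n` steps, ending with `obs n`. -/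
def hist (obs : ℕ → Set G.Q) (act : ℕ → G.A) (n : ℕ) : List (Set G.Q × G.A) :=
  (List.range n).map fun i => (obs i, act i)

/-- A play is consistent with an observation-based strategy of Eve. -/
def Consistent (str : List (Set G.Q × G.A) → Set G.Q → G.A)
    (obs : ℕ → Set G.Q) (act : ℕ → G.A) : Prop :=
  ∀ n, act n = str (G.hist obs act n) (obs n)

/-- Eve wins an objective if some observation-based strategy forces it on all plays. -/
def Wins (V : (ℕ → Set G.Q) → (ℕ → G.A) → Prop) : Prop :=
  ∃ str : List (Set G.Q × G.A) → Set G.Q → G.A,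
    ∀ obs act, G.IsPlay obs act → G.Consistent str obs act → V obs act

/-- σ-successors of a set of states. -/
def postSet (σ : G.A) (s : Set G.Q) : Set G.Q := {q' | ∃ q ∈ s, G.Δ q σ q'}

end WGA

/-- The perfect-information WGA of Figure 4: states `q₀ = false`, `q₁ = true`, a single
action, transitions `q₀ →(−1) q₁`, `q₁ →(+1) q₀`, `q₁ →0 q₁`, singleton observations. -/
def G3 : WGA where
  Q := Bool
  fintypeQ := inferInstance
  qI := false
  A := Unit
  fintypeA := inferInstance
  nonemptyA := inferInstance
  Δ := fun q _ q' => ¬(q = false ∧ q' = false)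
  total := fun _ _ => ⟨true, by simp⟩
  w := fun q _ q' => if q = false then (-1 : ℤ) else if q' = false then 1 else 0
  Obs := {{false}, {true}}
  obs_empty := by
    intro h
    simp only [Set.mem_insert_iff, Set.mem_singleton_iff] at h
    rcases h with h | h
    · exact Set.singleton_ne_empty false h.symm
    · exact Set.singleton_ne_empty true h.symm
  obs_partition := by
    intro q
    cases q
    · refine ⟨{false}, ⟨Or.inl rfl, rfl⟩, ?_⟩
      rintro o ⟨ho, hq⟩
      simp only [Set.mem_insert_iff, Set.mem_singleton_iff] at ho
      rcases ho with rfl | rfl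
      · rfl
      · simp only [Set.mem_singleton_iff] at hq
        exact absurd hq (by decide)
    · refine ⟨{true}, ⟨Or.inr rfl, rfl⟩, ?_⟩
      rintro o ⟨ho, hq⟩
      simp only [Set.mem_insert_iff, Set.mem_singleton_iff] at ho
      rcases ho with rfl | rfl
      · simp only [Set.mem_singleton_iff] at hq
        exact absurd hq (by decide)
      · rfl

/-!
Every transition weight of `G3` is a potential difference `w(q, a, q') = φ q' − φ q` with
`φ q₀ = 1` and `φ q₁ = 0`, so the weight of any window telescopes to `φ(end) − φ(start)`, which
lies in `{−1, 0, 1}`, and every mean payoff is `0`. On the other hand, the play visiting `q₀`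
exactly at the times `k(k+1)` spends the `2k+1` steps after each visit in `q₁`, so every window
of length at most `2k+1` starting at time `k(k+1)` has weight `−1`. As `k` grows, no window
bound works from any position on, which defeats `Bnd(0)`, the weakest window objective.
-/

open Filter Topology

theorem StrictMono.notMem_range_of_lt_of_lt {β : Type*} [Preorder β] {f : ℕ → β}
    (hf : StrictMono f) {k : ℕ} {b : β} (h₁ : f k < b) (h₂ : b < f (k + 1)) :
    b ∉ Set.range f := by
  rintro ⟨m, rfl⟩
  have := hf.lt_iff_lt.1 h₁
  have := hf.lt_iff_lt.1 h₂
  omega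

namespace WGA

variable {G : WGA}

def IsPotential (G : WGA) (φ : G.Q → ℤ) : Prop :=
  ∀ q a q', G.Δ q a q' → G.w q a q' = φ q' - φ q

theorem winSum_eq_of_isPotential {φ : G.Q → ℤ} (hφ : G.IsPotential φ) {π : ℕ → G.Q}
    {act : ℕ → G.A} (hπ : ∀ i, G.Δ (π i) (act i) (π (i + 1))) (i j : ℕ) :
    G.winSum π act i j = φ (π (i + j)) - φ (π i) := by
  unfold winSum
  rw [Finset.sum_congr rfl fun k _ => hφ _ _ _ (hπ (i + k))]
  exact Finset.sum_range_sub (fun k => φ (π (i + k))) j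

theorem tendsto_winSum_div_of_isPotential {φ : G.Q → ℤ} (hφ : G.IsPotential φ)
    {π : ℕ → G.Q} {act : ℕ → G.A} (hπ : ∀ i, G.Δ (π i) (act i) (π (i + 1))) :
    Tendsto (fun n : ℕ => (G.winSum π act 0 n : ℝ) / n) atTop (𝓝 0) := by
  obtain ⟨M, hM⟩ := Finite.exists_le φ
  obtain ⟨m, hm⟩ := Finite.exists_ge φ
  have hsum := winSum_eq_of_isPotential hφ hπ 0
  refine tendsto_bdd_div_atTop_nhds_zero (b := ((m - M : ℤ) : ℝ)) (B := ((M - m : ℤ) : ℝ))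
    (Eventually.of_forall fun n => ?_) (Eventually.of_forall fun n => ?_)
    tendsto_natCast_atTop_atTop
  · rw [hsum]
    exact_mod_cast sub_le_sub (hm _) (hM _)
  · rw [hsum]
    exact_mod_cast sub_le_sub (hM _) (hm _)

theorem mpInfObj_of_isPotential {φ : G.Q → ℤ} (hφ : G.IsPotential φ) {ν : ℚ} (hν : ν ≤ 0)
    (obs : ℕ → Set G.Q) (act : ℕ → G.A) : G.MPInfObj ν obs act := fun _ hπ => by
  rw [MPinf, (tendsto_winSum_div_of_isPotential hφ hπ.2).liminf_eq]
  exact_mod_cast hν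

theorem mpSupObj_of_isPotential {φ : G.Q → ℤ} (hφ : G.IsPotential φ) {ν : ℚ} (hν : ν ≤ 0)
    (obs : ℕ → Set G.Q) (act : ℕ → G.A) : G.MPSupObj ν obs act := fun _ hπ => by
  rw [MPsup, (tendsto_winSum_div_of_isPotential hφ hπ.2).limsup_eq]
  exact_mod_cast hν

section Hierarchy

variable {ν : ℚ} {lmax : ℕ} {obs : ℕ → Set G.Q} {act : ℕ → G.A}

theorem GW.one_le {i : ℕ} {π : ℕ → G.Q} (h : G.GW ν i lmax π act) : 1 ≤ lmax :=
  let ⟨_, h₁, hl, _⟩ := h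
  h₁.trans hl

theorem DirFix.uFix (h : G.DirFix ν lmax obs act) : G.UFix ν lmax obs act :=
  ⟨0, fun π hπ j _ => h π hπ j⟩

theorem UFix.fix (h : G.UFix ν lmax obs act) : G.Fix ν lmax obs act :=
  let ⟨i, hi⟩ := h
  fun π hπ => ⟨i, hi π hπ⟩

theorem Fix.bnd (h : G.Fix ν lmax obs act) : G.Bnd ν obs act := fun π hπ =>
  let ⟨i, hi⟩ := h π hπ
  ⟨lmax, (hi i le_rfl).one_le, i, hi⟩

theorem UDirBnd.dirBnd (h : G.UDirBnd ν obs act) : G.DirBnd ν obs act :=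
  let ⟨l, hl, hi⟩ := h
  fun π hπ => ⟨l, hl, hi π hπ⟩

theorem DirBnd.bnd (h : G.DirBnd ν obs act) : G.Bnd ν obs act := fun π hπ =>
  let ⟨l, hl, hi⟩ := h π hπ
  ⟨l, hl, 0, fun j _ => hi j⟩

theorem UBnd.bnd (h : G.UBnd ν obs act) : G.Bnd ν obs act :=
  let ⟨l, hl, i, hi⟩ := h
  fun π hπ => ⟨l, hl, i, hi π hπ⟩

end Hierarchy

theorem wins_of_forall {V : (ℕ → Set G.Q) → (ℕ → G.A) → Prop} (h : ∀ obs act, V obs act) :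
    G.Wins V :=
  ⟨fun _ _ => Classical.arbitrary _, fun obs act _ _ => h obs act⟩

theorem Wins.mono {V V' : (ℕ → Set G.Q) → (ℕ → G.A) → Prop}
    (h : ∀ obs act, V obs act → V' obs act) (hV : G.Wins V) : G.Wins V' :=
  let ⟨str, hstr⟩ := hV
  ⟨str, fun obs act hplay hcons => h obs act (hstr obs act hplay hcons)⟩

theorem not_wins_of_isPlay [Subsingleton G.A] {V : (ℕ → Set G.Q) → (ℕ → G.A) → Prop}
    {obs : ℕ → Set G.Q} {act : ℕ → G.A} (hplay : G.IsPlay obs act) (hV : ¬V obs act) :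
    ¬G.Wins V := fun ⟨_, hstr⟩ =>
  hV (hstr obs act hplay fun _ => Subsingleton.elim _ _)

theorem isPlay_singleton (hObs : ∀ q, {q} ∈ G.Obs) {π : ℕ → G.Q} {act : ℕ → G.A}
    (h₀ : π 0 = G.qI) (hπ : ∀ i, G.Δ (π i) (act i) (π (i + 1))) :
    G.IsPlay (fun n => {π n}) act :=
  ⟨fun _ => hObs _, Set.mem_singleton_iff.2 h₀.symm, π, fun _ => rfl, hπ⟩

end WGA

namespace G3

open WGA

instance : Subsingleton G3.A := inferInstanceAs (Subsingleton Unit)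

def potential (q : Bool) : ℤ := if q then 0 else 1

theorem isPotential_potential : G3.IsPotential potential := by
  rintro (_ | _) _ (_ | _) h <;> simp_all [G3, potential]

def visitTimes (k : ℕ) : ℕ := k * (k + 1)

theorem visitTimes_succ (k : ℕ) : visitTimes (k + 1) = visitTimes k + 2 * (k + 1) := by
  unfold visitTimes
  ring

theorem le_visitTimes (k : ℕ) : k ≤ visitTimes k :=
  Nat.le_mul_of_pos_right k k.succ_pos

theorem strictMono_visitTimes : StrictMono visitTimes :=
  strictMono_nat_of_lt_succ fun k => by rw [visitTimes_succ]; omega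

noncomputable def sparsePath (n : ℕ) : Bool := decide (n ∉ Set.range visitTimes)

theorem sparsePath_visitTimes (k : ℕ) : sparsePath (visitTimes k) = false := by
  simp [sparsePath]

theorem sparsePath_of_lt_of_lt {k n : ℕ} (h₁ : visitTimes k < n) (h₂ : n < visitTimes (k + 1)) :
    sparsePath n = true :=
  decide_eq_true (strictMono_visitTimes.notMem_range_of_lt_of_lt h₁ h₂)

theorem sparsePath_step (i : ℕ) (a : Unit) : G3.Δ (sparsePath i) a (sparsePath (i + 1)) := by
  rintro ⟨hi, hi₁⟩
  obtain ⟨k, rfl⟩ : i ∈ Set.range visitTimes := by simpa [sparsePath] using hi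
  have : sparsePath (visitTimes k + 1) = true :=
    sparsePath_of_lt_of_lt (k := k) (by omega) (by rw [visitTimes_succ]; omega)
  simp [this] at hi₁

theorem winSum_sparsePath (act : ℕ → Unit) {k j : ℕ} (hj₁ : 1 ≤ j) (hj : j ≤ 2 * k + 1) :
    G3.winSum sparsePath act (visitTimes k) j = -1 := by
  refine (winSum_eq_of_isPotential isPotential_potential
    (fun i => sparsePath_step i _) _ _).trans ?_
  show potential (sparsePath _) - potential (sparsePath _) = -1
  rw [sparsePath_visitTimes,
    sparsePath_of_lt_of_lt (k := k) (by omega) (by rw [visitTimes_succ]; omega)]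
  rfl

theorem not_gw_sparsePath (act : ℕ → Unit) {k lmax : ℕ} (hl : lmax ≤ 2 * k + 1) :
    ¬G3.GW 0 (visitTimes k) lmax sparsePath act := by
  rintro ⟨j, hj₁, hjl, hnonneg⟩
  rw [winSum_sparsePath act hj₁ (hjl.trans hl)] at hnonneg
  have hj : (0 : ℚ) < j := by exact_mod_cast hj₁
  rw [le_div_iff₀ hj] at hnonneg
  norm_num at hnonneg

theorem isPlay_sparsePath (act : ℕ → Unit) : G3.IsPlay (fun n => {sparsePath n}) act :=
  isPlay_singleton (by rintro (_ | _); exacts [Or.inl rfl, Or.inr rfl]) (sparsePath_visitTimes 0)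
    fun i => sparsePath_step i _

theorem not_bnd_sparsePath (act : ℕ → Unit) : ¬G3.Bnd 0 (fun n => {sparsePath n}) act := by
  intro h
  obtain ⟨lmax, -, i, hi⟩ := h sparsePath ⟨fun _ => rfl, fun i => sparsePath_step i _⟩
  have hk := le_visitTimes (max i lmax)
  exact not_gw_sparsePath act (k := max i lmax) (by omega) (hi _ (by omega))

theorem not_wins_bnd : ¬G3.Wins (G3.Bnd 0) :=
  not_wins_of_isPlay (isPlay_sparsePath fun _ => ()) (not_bnd_sparsePath _)

end G3

/-- in `G3`, Eve wins both mean-payoff objectives with threshold 0, but none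
of the fixed or bounded window mean-payoff objectives. -/
theorem mp_not_sufficient_for_wmp :
    G3.Wins (G3.MPInfObj 0) ∧ G3.Wins (G3.MPSupObj 0) ∧
    (∀ lmax : ℕ, 1 ≤ lmax →
      ¬ G3.Wins (G3.DirFix 0 lmax) ∧ ¬ G3.Wins (G3.UFix 0 lmax) ∧
      ¬ G3.Wins (G3.Fix 0 lmax)) ∧
    ¬ G3.Wins (G3.UDirBnd 0) ∧ ¬ G3.Wins (G3.DirBnd 0) ∧
    ¬ G3.Wins (G3.UBnd 0) ∧ ¬ G3.Wins (G3.Bnd 0) := by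
  have hφ := G3.isPotential_potential
  have hWindow : ∀ V, (∀ obs act, V obs act → G3.Bnd 0 obs act) → ¬G3.Wins V :=
    fun _ hV hW => G3.not_wins_bnd (hW.mono hV)
  exact ⟨WGA.wins_of_forall (WGA.mpInfObj_of_isPotential hφ le_rfl),
    WGA.wins_of_forall (WGA.mpSupObj_of_isPotential hφ le_rfl),
    fun _ _ => ⟨hWindow _ fun _ _ h => h.uFix.fix.bnd, hWindow _ fun _ _ h => h.fix.bnd,
      hWindow _ fun _ _ h => h.bnd⟩,
    hWindow _ fun _ _ h => h.dirBnd.bnd, hWindow _ fun _ _ h => h.bnd,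
    hWindow _ fun _ _ h => h.bnd, G3.not_wins_bnd⟩
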